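/- With θ₀ : ℓ²(ℕ) → B(ℓ²(ℕ₀)) the bounded-below algebra homomorphism determined by θ₀(δ_i) = θ_{δ_i, δ_i + δ_0}, and d ∈ ℕ, the map θ = id ⊗ θ₀ from ℓ²(ℕ, M_d(ℂ)) ≅ M_d(ℂ) ⊗ ℓ²(ℕ) (pointwise multiplication) into M_d(ℂ) ⊗ B(ℓ²(ℕ₀)) ≅ B(ℂ^d ⊗ ℓ²(ℕ₀)) is a bounded, bounded-below algebra homomorphism. -/

import Mathlib

/-!
`θ(a)γ = (0, a₀(γ₁ + γ₀), a₁(γ₂ + γ₀), …)` is bilinear with `‖θ(a)γ‖ ≤ 2‖a‖‖γ‖`, and it is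
multiplicative because the zeroth entry of `θ(b)γ` vanishes, so
`(θ(a)θ(b)γ)ᵢ₊₁ = aᵢ bᵢ (γᵢ₊₁ + γ₀)`. For the lower bound, test `θ(a)` on the vectors `δ₀ ⊗ bⱼ`
for an orthonormal basis `(bⱼ)` of `ℂ^d`: this gives `∑ᵢ ‖aᵢ bⱼ‖² ≤ ‖θ(a)‖²`; summing over `j`
and bounding the operator norm of each `aᵢ` by its Hilbert–Schmidt norm yields
`‖a‖ ≤ √d ‖θ(a)‖`.
-/

open scoped ENNReal InnerProductSpace

noncomputable section

namespace Memℓp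

variable {E : Type*} [NormedAddCommGroup E] {p : ℝ≥0∞}

theorem natCasesOn_zero (hp : 0 < p.toReal) {f : ℕ → E} (hf : Memℓp f p) :
    Memℓp (fun n : ℕ => Nat.casesOn (motive := fun _ => E) n 0 f) p := by
  rw [memℓp_gen_iff hp] at hf ⊢
  exact (summable_nat_add_iff 1).mp hf

end Memℓp

namespace lp

variable {p : ℝ≥0∞}

theorem norm_le_mul_of_forall_norm_le {α : Type*} {E F : α → Type*}
    [∀ i, NormedAddCommGroup (E i)] [∀ i, NormedAddCommGroup (F i)] (hp : 0 < p.toReal)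
    {C : ℝ} (hC : 0 ≤ C) {x : lp E p} {y : lp F p} (h : ∀ i, ‖x i‖ ≤ C * ‖y i‖) :
    ‖x‖ ≤ C * ‖y‖ :=
  norm_le_of_forall_sum_le hp (mul_nonneg hC (norm_nonneg' y)) fun s => calc
    ∑ i ∈ s, ‖x i‖ ^ p.toReal ≤ ∑ i ∈ s, (C * ‖y i‖) ^ p.toReal := by
      gcongr with i; exact h i
    _ = C ^ p.toReal * ∑ i ∈ s, ‖y i‖ ^ p.toReal := by
      simp_rw [Real.mul_rpow hC (norm_nonneg _), Finset.mul_sum]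
    _ ≤ C ^ p.toReal * ‖y‖ ^ p.toReal := by gcongr; exact sum_rpow_le_norm_rpow hp y s
    _ = (C * ‖y‖) ^ p.toReal := (Real.mul_rpow hC (norm_nonneg' y)).symm

theorem norm_eq_of_apply_zero_of_apply_succ {E : Type*} [NormedAddCommGroup E]
    (hp : 0 < p.toReal) {x y : lp (fun _ : ℕ => E) p} (h0 : x 0 = 0)
    (hsucc : ∀ n, x (n + 1) = y n) : ‖x‖ = ‖y‖ := by
  rw [norm_eq_tsum_rpow hp, norm_eq_tsum_rpow hp, ((lp.memℓp x).summable hp).tsum_eq_zero_add]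
  simp [h0, hsucc, Real.zero_rpow hp.ne']

end lp

theorem OrthonormalBasis.opNorm_sq_le_sum_sq_norm_apply {𝕜 E F ι : Type*} [RCLike 𝕜]
    [NormedAddCommGroup E] [InnerProductSpace 𝕜 E] [NormedAddCommGroup F] [NormedSpace 𝕜 F]
    [Fintype ι] (b : OrthonormalBasis ι 𝕜 E) (T : E →L[𝕜] F) :
    ‖T‖ ^ 2 ≤ ∑ i, ‖T (b i)‖ ^ 2 := by
  suffices ‖T‖ ≤ √(∑ i, ‖T (b i)‖ ^ 2) from
    (Real.le_sqrt (norm_nonneg _) (by positivity)).mp this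
  refine T.opNorm_le_bound (by positivity) fun x => ?_
  calc ‖T x‖ = ‖∑ i, ⟪b i, x⟫_𝕜 • T (b i)‖ := by
        conv_lhs => rw [← b.sum_repr' x]
        simp only [map_sum, map_smul]
    _ ≤ ∑ i, ‖⟪b i, x⟫_𝕜‖ * ‖T (b i)‖ := (norm_sum_le _ _).trans_eq (by simp only [norm_smul])
    _ ≤ √(∑ i, ‖⟪b i, x⟫_𝕜‖ ^ 2) * √(∑ i, ‖T (b i)‖ ^ 2) := Real.sum_mul_le_sqrt_mul_sqrt _ _ _
    _ = √(∑ i, ‖T (b i)‖ ^ 2) * ‖x‖ := by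
        rw [b.sum_sq_norm_inner_right, Real.sqrt_sq (norm_nonneg _), mul_comm]

local notation "ℓ²(" X ")" => lp (fun _ : ℕ => X) 2

section Theta

variable {𝕜 E : Type*} [NontriviallyNormedField 𝕜] [NormedAddCommGroup E] [NormedSpace 𝕜 E]

theorem norm_apply_succ_add_apply_zero_le (a : ℓ²(E →L[𝕜] E)) (γ : ℓ²(E)) (i : ℕ) :
    ‖a i (γ (i + 1) + γ 0)‖ ≤ 2 * ‖γ‖ * ‖a i‖ := calc
  ‖a i (γ (i + 1) + γ 0)‖ ≤ ‖a i‖ * ‖γ (i + 1) + γ 0‖ := (a i).le_opNorm _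
  _ ≤ ‖a i‖ * (‖γ‖ + ‖γ‖) := by
      gcongr
      exact (norm_add_le _ _).trans (add_le_add (lp.norm_apply_le_norm two_ne_zero γ _)
        (lp.norm_apply_le_norm two_ne_zero γ _))
  _ = 2 * ‖γ‖ * ‖a i‖ := by ring

def thetaTail (a : ℓ²(E →L[𝕜] E)) (γ : ℓ²(E)) : ℓ²(E) :=
  ⟨fun i => a i (γ (i + 1) + γ 0),
    ((lp.memℓp a).norm.const_mul (2 * ‖γ‖)).mono (norm_apply_succ_add_apply_zero_le a γ)⟩

theorem norm_thetaTail_le (a : ℓ²(E →L[𝕜] E)) (γ : ℓ²(E)) :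
    ‖thetaTail a γ‖ ≤ 2 * ‖a‖ * ‖γ‖ := by
  rw [mul_right_comm]
  exact lp.norm_le_mul_of_forall_norm_le (by norm_num) (by positivity)
    (norm_apply_succ_add_apply_zero_le a γ)

def thetaApply (a : ℓ²(E →L[𝕜] E)) (γ : ℓ²(E)) : ℓ²(E) :=
  ⟨fun n => Nat.casesOn (motive := fun _ => E) n 0 (thetaTail a γ),
    Memℓp.natCasesOn_zero (by norm_num) (lp.memℓp _)⟩

@[simp] theorem thetaApply_zero (a : ℓ²(E →L[𝕜] E)) (γ : ℓ²(E)) : thetaApply a γ 0 = 0 := rfl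

@[simp] theorem thetaApply_succ (a : ℓ²(E →L[𝕜] E)) (γ : ℓ²(E)) (i : ℕ) :
    thetaApply a γ (i + 1) = a i (γ (i + 1) + γ 0) := rfl

theorem norm_thetaApply (a : ℓ²(E →L[𝕜] E)) (γ : ℓ²(E)) :
    ‖thetaApply a γ‖ = ‖thetaTail a γ‖ :=
  lp.norm_eq_of_apply_zero_of_apply_succ (by norm_num) rfl fun _ => rfl

variable (𝕜 E) in
def theta : ℓ²(E →L[𝕜] E) →L[𝕜] ℓ²(E) →L[𝕜] ℓ²(E) :=
  LinearMap.mkContinuous₂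
    (LinearMap.mk₂ 𝕜 thetaApply
      (fun a a' γ => by ext (_ | i) <;> simp)
      (fun c a γ => by ext (_ | i) <;> simp)
      (fun a γ γ' => by ext (_ | i) <;> simp [add_add_add_comm])
      (fun c a γ => by ext (_ | i) <;> simp [smul_add]))
    2 fun a γ => (norm_thetaApply a γ).trans_le (norm_thetaTail_le a γ)

@[simp] theorem theta_apply (a : ℓ²(E →L[𝕜] E)) (γ : ℓ²(E)) :
    theta 𝕜 E a γ = thetaApply a γ := rfl

theorem theta_mul {a b c : ℓ²(E →L[𝕜] E)} (h : ∀ n, c n = a n * b n) :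
    theta 𝕜 E c = theta 𝕜 E a * theta 𝕜 E b := by
  ext γ (_ | i) <;> simp [h]

end Theta

section BoundedBelow

variable {𝕜 E ι : Type*} [RCLike 𝕜] [NormedAddCommGroup E] [InnerProductSpace 𝕜 E] [Fintype ι]

theorem sum_norm_apply_sq_le (a : ℓ²(E →L[𝕜] E)) (x : E) (s : Finset ℕ) :
    ∑ i ∈ s, ‖a i x‖ ^ 2 ≤ (‖theta 𝕜 E a‖ * ‖x‖) ^ 2 := by
  set γ : ℓ²(E) := lp.single 2 0 x
  have hγ : ∀ i, a i (γ (i + 1) + γ 0) = a i x := fun i => by simp [γ]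
  calc ∑ i ∈ s, ‖a i x‖ ^ 2 = ∑ i ∈ s, ‖thetaTail a γ i‖ ^ (2 : ℕ) := by simp [thetaTail, hγ]
    _ ≤ ‖thetaTail a γ‖ ^ 2 := by
      simpa using lp.sum_rpow_le_norm_rpow (p := 2) (by norm_num) (thetaTail a γ) s
    _ = ‖theta 𝕜 E a γ‖ ^ 2 := by rw [theta_apply, norm_thetaApply]
    _ ≤ (‖theta 𝕜 E a‖ * ‖x‖) ^ 2 := by
      gcongr
      simpa [γ, lp.norm_single] using (theta 𝕜 E a).le_opNorm γ

theorem norm_le_sqrt_card_mul_norm_theta (b : OrthonormalBasis ι 𝕜 E) (a : ℓ²(E →L[𝕜] E)) :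
    ‖a‖ ≤ √(Fintype.card ι) * ‖theta 𝕜 E a‖ := by
  refine lp.norm_le_of_forall_sum_le (by norm_num) (by positivity) fun s => ?_
  simp only [ENNReal.toReal_ofNat, Real.rpow_two]
  calc ∑ i ∈ s, ‖a i‖ ^ 2 ≤ ∑ i ∈ s, ∑ j, ‖a i (b j)‖ ^ 2 :=
        Finset.sum_le_sum fun i _ => b.opNorm_sq_le_sum_sq_norm_apply (a i)
    _ = ∑ j, ∑ i ∈ s, ‖a i (b j)‖ ^ 2 := Finset.sum_comm
    _ ≤ ∑ _j : ι, ‖theta 𝕜 E a‖ ^ 2 :=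
        Finset.sum_le_sum fun j _ => (sum_norm_apply_sq_le a (b j) s).trans_eq (by simp)
    _ = (√(Fintype.card ι) * ‖theta 𝕜 E a‖) ^ 2 := by simp [mul_pow]

end BoundedBelow

end

/-- With `θ₀ : ℓ²(ℕ) → B(ℓ²(ℕ₀))` the bounded-below homomorphism determined by
`θ₀(δ_i) = θ_{δ_i, δ_i+δ_0}`, the map `θ = id ⊗ θ₀` from `ℓ²(ℕ, M_d(ℂ))` (pointwise
multiplication) into `M_d(ℂ) ⊗ B(ℓ²(ℕ₀)) ≅ B(ℂ^d ⊗ ℓ²(ℕ₀))` is a bounded, bounded-below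
algebra homomorphism.  Here `ℂ^d ⊗ ℓ²(ℕ₀)` is modelled as `ℓ²(ℕ, ℂ^d)`, `M_d(ℂ)` as
`B(ℂ^d)`, and `θ` acts by `(θ(a)γ)_0 = 0`, `(θ(a)γ)_{i+1} = a_i(γ_{i+1} + γ_0)`. -/
theorem stmt_12 (d : ℕ) :
    ∃ θ : lp (fun _ : ℕ => EuclideanSpace ℂ (Fin d) →L[ℂ] EuclideanSpace ℂ (Fin d)) 2 →L[ℂ]
        (lp (fun _ : ℕ => EuclideanSpace ℂ (Fin d)) 2 →L[ℂ]
          lp (fun _ : ℕ => EuclideanSpace ℂ (Fin d)) 2),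
      (∀ a γ,
        ((θ a γ : ∀ _ : ℕ, EuclideanSpace ℂ (Fin d)) 0 = 0) ∧
        (∀ i : ℕ, (θ a γ : ∀ _ : ℕ, EuclideanSpace ℂ (Fin d)) (i + 1) =
          (a : ∀ _ : ℕ, EuclideanSpace ℂ (Fin d) →L[ℂ] EuclideanSpace ℂ (Fin d)) i
            ((γ : ∀ _ : ℕ, EuclideanSpace ℂ (Fin d)) (i + 1) +
              (γ : ∀ _ : ℕ, EuclideanSpace ℂ (Fin d)) 0))) ∧
      (∀ a b c : lp (fun _ : ℕ => EuclideanSpace ℂ (Fin d) →L[ℂ] EuclideanSpace ℂ (Fin d)) 2,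
        (∀ n : ℕ,
          (c : ∀ _ : ℕ, EuclideanSpace ℂ (Fin d) →L[ℂ] EuclideanSpace ℂ (Fin d)) n =
            (a : ∀ _ : ℕ, EuclideanSpace ℂ (Fin d) →L[ℂ] EuclideanSpace ℂ (Fin d)) n *
              (b : ∀ _ : ℕ, EuclideanSpace ℂ (Fin d) →L[ℂ] EuclideanSpace ℂ (Fin d)) n) →
          θ c = θ a * θ b) ∧
      ∃ C : ℝ, 0 < C ∧ ∀ a, C * ‖a‖ ≤ ‖θ a‖ := by
  refine ⟨theta ℂ _, fun a γ => ⟨rfl, fun i => rfl⟩, fun a b c => theta_mul,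
    (√d + 1)⁻¹, by positivity, fun a => ?_⟩
  rw [inv_mul_le_iff₀ (by positivity)]
  calc ‖a‖ ≤ √d * ‖theta ℂ _ a‖ := by
        simpa using norm_le_sqrt_card_mul_norm_theta (EuclideanSpace.basisFun (Fin d) ℂ) a
    _ ≤ (√d + 1) * ‖theta ℂ _ a‖ := by gcongr; linarith
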